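/- If M is a block diagonally dominant Hermitian block matrix written as D - A with D block-diagonal and A having zero diagonal blocks, then D + A is also block diagonally dominant (and hence positive semidefinite). -/

import Mathlib

/-!
Flipping the sign of the off-diagonal blocks does not change their operator norms, so `D + A` is
bDD as soon as `D - A` is. A Hermitian bDD block matrix `M` is positive semidefinite: for
`x = (xᵢ)` put `aᵢ = ‖xᵢ‖` and `mᵢⱼ = ‖Mᵢⱼ‖`; the diagonal blocks contribute at least
`∑_{j ≠ i} mᵢⱼ aᵢ²` to `Re ⟨x, M x⟩`, each off-diagonal block at least `-mᵢⱼ aᵢ aⱼ`, and since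
`m` is symmetric, `∑ᵢⱼ mᵢⱼ (aᵢ² - aᵢ aⱼ) = ½ ∑ᵢⱼ mᵢⱼ (aᵢ - aⱼ)² ≥ 0`.
-/

open Matrix Finset
open scoped ComplexOrder

/-- The `ℓ²` operator norm of a square complex matrix. -/
noncomputable def matOpNorm {r : ℕ} (A : Matrix (Fin r) (Fin r) ℂ) : ℝ :=
  ‖(Matrix.toEuclideanCLM (𝕜 := ℂ) A : EuclideanSpace ℂ (Fin r) →L[ℂ] EuclideanSpace ℂ (Fin r))‖

/-- A Hermitian block matrix (given by its `r × r` blocks) is block diagonally dominant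
if for every `i`, `M i i ⪰ (∑_{j ≠ i} ‖M i j‖) · I`. -/
def IsBDD {n r : ℕ} (M : Fin n → Fin n → Matrix (Fin r) (Fin r) ℂ) : Prop :=
  ∀ i, (M i i - (∑ j ∈ Finset.univ.erase i, matOpNorm (M i j)) •
      (1 : Matrix (Fin r) (Fin r) ℂ)).PosSemidef

/-- Flatten a block matrix into an ordinary matrix. -/
def flatten {n r : ℕ} (M : Fin n → Fin n → Matrix (Fin r) (Fin r) ℂ) :
    Matrix (Fin n × Fin r) (Fin n × Fin r) ℂ :=
  Matrix.of fun p q => M p.1 q.1 p.2 q.2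

open scoped Matrix.Norms.L2Operator

lemma matOpNorm_eq_l2_opNorm {r : ℕ} (A : Matrix (Fin r) (Fin r) ℂ) : matOpNorm A = ‖A‖ := rfl

lemma Matrix.norm_star_dotProduct_mulVec_le {𝕜 m n : Type*} [RCLike 𝕜] [Fintype m] [Fintype n]
    [DecidableEq n] (A : Matrix m n 𝕜) (v : m → 𝕜) (w : n → 𝕜) :
    ‖star v ⬝ᵥ A *ᵥ w‖ ≤ ‖A‖ * ‖WithLp.toLp 2 v‖ * ‖WithLp.toLp 2 w‖ :=
  calc ‖star v ⬝ᵥ A *ᵥ w‖ = ‖inner 𝕜 (WithLp.toLp 2 v) (WithLp.toLp 2 (A *ᵥ w))‖ := by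
        rw [EuclideanSpace.inner_toLp_toLp, dotProduct_comm]
    _ ≤ ‖WithLp.toLp 2 v‖ * (‖A‖ * ‖WithLp.toLp 2 w‖) :=
        (norm_inner_le_norm _ _).trans
          (mul_le_mul_of_nonneg_left (A.l2_opNorm_mulVec _) (norm_nonneg _))
    _ = ‖A‖ * ‖WithLp.toLp 2 v‖ * ‖WithLp.toLp 2 w‖ := by ring

lemma Matrix.PosSemidef.mul_norm_sq_le_re_star_dotProduct_mulVec {𝕜 n : Type*} [RCLike 𝕜]
    [Fintype n] [DecidableEq n] {B : Matrix n n 𝕜} {c : ℝ} (h : (B - c • 1).PosSemidef)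
    (v : n → 𝕜) : c * ‖WithLp.toLp 2 v‖ ^ 2 ≤ RCLike.re (star v ⬝ᵥ B *ᵥ v) := by
  have hv : star v ⬝ᵥ v = (‖WithLp.toLp 2 v‖ : 𝕜) ^ 2 := by
    rw [← inner_self_eq_norm_sq_to_K, EuclideanSpace.inner_toLp_toLp, dotProduct_comm]
  have := RCLike.nonneg_iff.mp (h.dotProduct_mulVec_nonneg v) |>.1
  rw [sub_mulVec, dotProduct_sub, smul_mulVec, one_mulVec, dotProduct_smul, hv,
    map_sub, RCLike.real_smul_eq_coe_mul, ← RCLike.ofReal_pow, ← RCLike.ofReal_mul,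
    RCLike.ofReal_re] at this
  linarith

lemma sum_sum_mul_sq_sub_mul_nonneg {ι : Type*} [Fintype ι] (m : ι → ι → ℝ) (a : ι → ℝ)
    (hm : ∀ i j, 0 ≤ m i j) (hsymm : ∀ i j, m i j = m j i) :
    0 ≤ ∑ i, ∑ j, m i j * (a i ^ 2 - a i * a j) := by
  have hswap : ∑ i, ∑ j, m i j * (a i ^ 2 - a i * a j) =
      ∑ i, ∑ j, m i j * (a j ^ 2 - a j * a i) := by
    rw [sum_comm]
    exact sum_congr rfl fun i _ => sum_congr rfl fun j _ => by rw [hsymm]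
  have hsq : 0 ≤ ∑ i, ∑ j, m i j * (a i - a j) ^ 2 :=
    sum_nonneg fun i _ => sum_nonneg fun j _ => mul_nonneg (hm i j) (sq_nonneg _)
  have hsplit : ∑ i, ∑ j, m i j * (a i - a j) ^ 2 =
      ∑ i, ∑ j, m i j * (a i ^ 2 - a i * a j) + ∑ i, ∑ j, m i j * (a j ^ 2 - a j * a i) := by
    simp only [← sum_add_distrib]
    exact sum_congr rfl fun i _ => sum_congr rfl fun j _ => by ring
  linarith

section

variable {n r : ℕ}

lemma isHermitian_flatten {M : Fin n → Fin n → Matrix (Fin r) (Fin r) ℂ}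
    (hHerm : ∀ i j, (M i j)ᴴ = M j i) : (flatten M).IsHermitian := by
  ext p q
  have := congrFun (congrFun (hHerm q.1 p.1) p.2) q.2
  rw [conjTranspose_apply] at this
  simpa [flatten, conjTranspose_apply] using this

lemma star_dotProduct_flatten_mulVec (M : Fin n → Fin n → Matrix (Fin r) (Fin r) ℂ)
    (x : Fin n × Fin r → ℂ) :
    star x ⬝ᵥ flatten M *ᵥ x =
      ∑ i, ∑ j, star (Function.curry x i) ⬝ᵥ M i j *ᵥ Function.curry x j := by
  simp only [dotProduct, mulVec, flatten, of_apply, Fintype.sum_prod_type, mul_sum,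
    Pi.star_apply, Function.curry_apply]
  exact sum_congr rfl fun i _ => sum_comm

lemma IsBDD.sum_erase_mul_le_re_sum {M : Fin n → Fin n → Matrix (Fin r) (Fin r) ℂ}
    (hbdd : IsBDD M) (v : Fin n → Fin r → ℂ) (i : Fin n) :
    ∑ j ∈ univ.erase i, matOpNorm (M i j) *
        (‖WithLp.toLp 2 (v i)‖ ^ 2 - ‖WithLp.toLp 2 (v i)‖ * ‖WithLp.toLp 2 (v j)‖) ≤
      RCLike.re (∑ j, star (v i) ⬝ᵥ M i j *ᵥ v j) := by
  set a : Fin n → ℝ := fun i => ‖WithLp.toLp 2 (v i)‖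
  have hdiag := (hbdd i).mul_norm_sq_le_re_star_dotProduct_mulVec (v i)
  have hoff (j : Fin n) : -(matOpNorm (M i j) * a i * a j) ≤
      RCLike.re (star (v i) ⬝ᵥ M i j *ᵥ v j) :=
    (neg_le_neg ((M i j).norm_star_dotProduct_mulVec_le (v i) (v j))).trans
      (abs_le.mp (RCLike.abs_re_le_norm _)).1
  rw [← add_sum_erase _ _ (mem_univ i), map_add, map_sum]
  calc ∑ j ∈ univ.erase i, matOpNorm (M i j) * (a i ^ 2 - a i * a j)
      = (∑ j ∈ univ.erase i, matOpNorm (M i j)) * a i ^ 2 +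
          ∑ j ∈ univ.erase i, -(matOpNorm (M i j) * a i * a j) := by
        rw [sum_mul, ← sum_add_distrib]
        exact sum_congr rfl fun j _ => by ring
    _ ≤ _ := add_le_add hdiag (sum_le_sum fun j _ => hoff j)

theorem IsBDD.posSemidef_flatten {M : Fin n → Fin n → Matrix (Fin r) (Fin r) ℂ}
    (hbdd : IsBDD M) (hHerm : ∀ i j, (M i j)ᴴ = M j i) : (flatten M).PosSemidef := by
  refine .of_dotProduct_mulVec_nonneg (isHermitian_flatten hHerm) fun x => ?_
  set a : Fin n → ℝ := fun i => ‖WithLp.toLp 2 (Function.curry x i)‖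
  have hsymm (i j : Fin n) : matOpNorm (M i j) = matOpNorm (M j i) := by
    rw [← hHerm i j, matOpNorm_eq_l2_opNorm, matOpNorm_eq_l2_opNorm, l2_opNorm_conjTranspose]
  have hre : 0 ≤ RCLike.re (star x ⬝ᵥ flatten M *ᵥ x) := by
    rw [star_dotProduct_flatten_mulVec, map_sum]
    refine (sum_sum_mul_sq_sub_mul_nonneg (fun i j => matOpNorm (M i j)) a
      (fun _ _ => norm_nonneg _) hsymm).trans (sum_le_sum fun i _ => ?_)
    rw [← sum_erase (f := fun j => matOpNorm (M i j) * (a i ^ 2 - a i * a j)) univ (by ring)]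
    exact hbdd.sum_erase_mul_le_re_sum (Function.curry x) i
  exact RCLike.nonneg_iff.mpr
    ⟨hre, (isHermitian_flatten hHerm).im_star_dotProduct_mulVec_self x⟩

/-- For `M = D - A` this is `D + A`. -/
def negOffDiag (M : Fin n → Fin n → Matrix (Fin r) (Fin r) ℂ) :
    Fin n → Fin n → Matrix (Fin r) (Fin r) ℂ :=
  fun i j => if i = j then M i i else -M i j

lemma negOffDiag_self (M : Fin n → Fin n → Matrix (Fin r) (Fin r) ℂ) (i : Fin n) :
    negOffDiag M i i = M i i :=
  if_pos rfl

lemma matOpNorm_negOffDiag (M : Fin n → Fin n → Matrix (Fin r) (Fin r) ℂ)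
    (i j : Fin n) : matOpNorm (negOffDiag M i j) = matOpNorm (M i j) := by
  unfold negOffDiag
  split_ifs with h
  · rw [h]
  · rw [matOpNorm_eq_l2_opNorm, matOpNorm_eq_l2_opNorm, norm_neg]

lemma isBDD_negOffDiag_iff (M : Fin n → Fin n → Matrix (Fin r) (Fin r) ℂ) :
    IsBDD (negOffDiag M) ↔ IsBDD M := by
  simp only [IsBDD, matOpNorm_negOffDiag, negOffDiag_self]

lemma conjTranspose_negOffDiag {M : Fin n → Fin n → Matrix (Fin r) (Fin r) ℂ}
    (hHerm : ∀ i j, (M i j)ᴴ = M j i) (i j : Fin n) :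
    (negOffDiag M i j)ᴴ = negOffDiag M j i := by
  unfold negOffDiag
  split_ifs with h h' h'
  · subst h; exact hHerm i i
  · exact absurd h.symm h'
  · exact absurd h'.symm h
  · rw [conjTranspose_neg, hHerm]

end

/-- If `M = D - A` is a Hermitian bDD block matrix with `D` its block-diagonal part and `A`
its (negated) off-diagonal part, then `D + A` (i.e. the matrix obtained by flipping the sign
of all off-diagonal blocks) is also bDD, and hence positive semidefinite. -/
theorem stmt_7 {n r : ℕ} (M : Fin n → Fin n → Matrix (Fin r) (Fin r) ℂ)
    (hHerm : ∀ i j, (M i j)ᴴ = M j i) (hbdd : IsBDD M) :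
    IsBDD (fun i j => if i = j then M i i else - M i j) ∧
      (flatten (fun i j => if i = j then M i i else - M i j)).PosSemidef := by
  have hbdd' : IsBDD (negOffDiag M) := (isBDD_negOffDiag_iff M).mpr hbdd
  exact ⟨hbdd', hbdd'.posSemidef_flatten (conjTranspose_negOffDiag hHerm)⟩
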